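/- arXiv:0809.0144 — 2 statements merged into one kernel-verified Lean document; each statement's English description precedes it below -/
import Mathlib

section
/- With z and d the p×p matrices of the previous statement (z the lower shift, d_{j-1,j} = (q-q⁻¹)q^{2-j}[j-1]_q), the element t = Σ_{i=1}^{p-1} (1/[i]_q)·z^i·d^i equals (q - q⁻¹) times the diagonal matrix diag(0, 1, 2, …, p-1) with ordinary integer entries. -/
/-!
`zᵏ dᵏ` is diagonal, its `a`-th entry being the product of the weights `d_{m-1,m}` over
`a - k < m ≤ a`. With `x = q⁻²` each weight is `q (1 - xᵐ)` and `[k]_q = qᵏ (1 - xᵏ) / (q - q⁻¹)`,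
so the `a`-th diagonal entry of `t` is `(q - q⁻¹)` times
`∑_{k=1}^{a} (1 - xᵃ) ⋯ (1 - x^{a-k+1}) / (1 - xᵏ)`.
This sum equals `a` whenever `xᵏ ≠ 1` for `0 < k ≤ a`, by induction on `a` using the
`q`-Pascal relation `1 - x^{a+1} = (1 - x^{k+1}) + x^{k+1} (1 - x^{a-k})`;
and `q⁻²` is a primitive `p`-th root of unity.
-/

/-- Balanced quantum integer `[n]_q = (q^n - q^{-n})/(q - q^{-1})`. -/
noncomputable def qint (q : ℂ) (n : ℕ) : ℂ := (q ^ n - q⁻¹ ^ n) / (q - q⁻¹)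

/-- The `p×p` lower shift matrix `z`. -/
noncomputable def zmat (p : ℕ) : Matrix (Fin p) (Fin p) ℂ :=
  Matrix.of fun i j => if (i : ℕ) = (j : ℕ) + 1 then 1 else 0

/-- The `p×p` superdiagonal matrix `d`: in 1-based indexing,
`d_{j-1,j} = (q - q⁻¹) q^{2-j} [j-1]_q`. -/
noncomputable def dmat (p : ℕ) (q : ℂ) : Matrix (Fin p) (Fin p) ℂ :=
  Matrix.of fun i j =>
    if (j : ℕ) = (i : ℕ) + 1 then (q - q⁻¹) * q ^ (1 - ((j : ℕ) : ℤ)) * qint q (j : ℕ)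
    else 0

open Finset Matrix

section WeightedShift

variable {R : Type*} [CommSemiring R] {p : ℕ}

def weightedShift (p : ℕ) (w : ℕ → R) : Matrix (Fin p) (Fin p) R :=
  of fun i j => if (j : ℕ) = i + 1 then w j else 0

theorem weightedShift_apply (w : ℕ → R) (i j : Fin p) :
    weightedShift p w i j = if (j : ℕ) = i + 1 then w j else 0 := rfl

theorem weightedShift_pow_apply (w : ℕ → R) (k : ℕ) (i j : Fin p) :
    (weightedShift p w ^ k) i j = if (j : ℕ) = i + k then ∏ m ∈ Ioc (i : ℕ) j, w m else 0 := by
  induction k generalizing j with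
  | zero =>
    simp only [pow_zero, one_apply, Fin.ext_iff, add_zero, eq_comm]
    split_ifs with h <;> simp [h]
  | succ k ih =>
    simp only [pow_succ, mul_apply, ih, weightedShift_apply]
    by_cases hj : (j : ℕ) = i + (k + 1)
    · rw [Fintype.sum_eq_single ⟨j - 1, by omega⟩]
      · have hj' : (j : ℕ) = (j - 1) + 1 := by omega
        rw [if_pos (by simp; omega), if_pos (by simp; omega), if_pos hj]
        conv_rhs => rw [hj', prod_Ioc_succ_top (by omega), ← hj']
      · intro l hl
        rw [if_neg, zero_mul]
        intro h
        exact hl (Fin.ext (by simp; omega))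
    · rw [if_neg hj]
      refine sum_eq_zero fun l _ => ?_
      split_ifs <;> first | simp | omega

theorem transpose_weightedShift_pow_mul_pow (v w : ℕ → R) (k : ℕ) :
    (weightedShift p v ^ k)ᵀ * weightedShift p w ^ k =
      diagonal fun a : Fin p =>
        if k ≤ (a : ℕ) then ∏ m ∈ Ioc ((a : ℕ) - k) a, v m * w m else 0 := by
  ext a b
  simp only [mul_apply, diagonal_apply, transpose_apply, weightedShift_pow_apply]
  by_cases hab : a = b ∧ k ≤ (a : ℕ)
  · obtain ⟨rfl, hk⟩ := hab
    rw [Fintype.sum_eq_single ⟨a - k, by omega⟩]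
    · simp [hk, Nat.sub_add_cancel, prod_mul_distrib]
    · intro l hl
      rw [if_neg, zero_mul]
      intro h
      exact hl (Fin.ext (by simp; omega))
  · refine (sum_eq_zero fun l _ => ?_).trans ?_
    · split_ifs <;> first
        | simp
        | exact absurd ⟨Fin.ext (by omega), by omega⟩ hab
    · split_ifs with h1 h2 <;> first | rfl | exact absurd ⟨h1, h2⟩ hab

end WeightedShift

section QDescFactorial

variable {K : Type*} [Field K]

def qDescFactorial (x : K) (a i : ℕ) : K := ∏ m ∈ Ioc (a - i) a, (1 - x ^ m)

@[simp]
theorem qDescFactorial_zero_right (x : K) (a : ℕ) : qDescFactorial x a 0 = 1 := by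
  simp [qDescFactorial]

theorem qDescFactorial_succ_succ (x : K) (a i : ℕ) :
    qDescFactorial x (a + 1) (i + 1) = qDescFactorial x a i * (1 - x ^ (a + 1)) := by
  rw [qDescFactorial, Nat.add_sub_add_right, prod_Ioc_succ_top (Nat.sub_le a i), qDescFactorial]

theorem qDescFactorial_succ_right (x : K) {a i : ℕ} (h : i < a) :
    qDescFactorial x a (i + 1) = (1 - x ^ (a - i)) * qDescFactorial x a i := by
  have hsplit : a - (i + 1) + 1 = a - i := by omega
  rw [qDescFactorial,
    ← prod_Ioc_consecutive _ (Nat.sub_le_sub_left (Nat.le_succ i) a) (Nat.sub_le a i), ← hsplit, Nat.Ioc_succ_singleton, prod_singleton, hsplit, qDescFactorial]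

theorem sum_range_qDescFactorial_div (x : K) (a : ℕ) (hx : ∀ i < a, 1 - x ^ (i + 1) ≠ 0) :
    ∑ i ∈ range a, qDescFactorial x a (i + 1) / (1 - x ^ (i + 1)) = a := by
  induction a with
  | zero => simp
  | succ a ih =>
    have hpascal : ∀ i < a, qDescFactorial x (a + 1) (i + 1) / (1 - x ^ (i + 1)) =
        qDescFactorial x a i + x ^ (i + 1) * (qDescFactorial x a (i + 1) / (1 - x ^ (i + 1))) := by
      intro i hi
      have hxi := hx i (by omega)
      have hpow : x ^ (a + 1) = x ^ (i + 1) * x ^ (a - i) := by rw [← pow_add]; congr 1; omega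
      rw [qDescFactorial_succ_succ, qDescFactorial_succ_right x hi]
      field_simp
      linear_combination (-(qDescFactorial x a i)) * hpow
    have hcancel : ∀ i < a, qDescFactorial x a (i + 1) +
        x ^ (i + 1) * (qDescFactorial x a (i + 1) / (1 - x ^ (i + 1))) =
          qDescFactorial x a (i + 1) / (1 - x ^ (i + 1)) := by
      intro i hi
      have hxi := hx i (by omega)
      field_simp
      ring
    have htop : qDescFactorial x (a + 1) (a + 1) / (1 - x ^ (a + 1)) = qDescFactorial x a a := by
      rw [qDescFactorial_succ_succ, mul_div_cancel_right₀ _ (hx a (by omega))]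
    rw [sum_range_succ, htop, sum_congr rfl fun i hi => hpascal i (mem_range.mp hi),
      sum_add_distrib, add_right_comm, ← sum_range_succ, sum_range_succ', qDescFactorial_zero_right,
      add_right_comm, ← sum_add_distrib, sum_congr rfl fun i hi => hcancel i (mem_range.mp hi),
      ih fun i hi => hx i (by omega)]
    push_cast
    ring

theorem sum_Icc_qDescFactorial_div (x : K) (a : ℕ) (hx : ∀ i ∈ Icc 1 a, 1 - x ^ i ≠ 0) :
    ∑ i ∈ Icc 1 a, qDescFactorial x a i / (1 - x ^ i) = a := by
  rw [← Ico_add_one_right_eq_Icc, sum_Ico_eq_sum_range, Nat.add_sub_cancel]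
  simp_rw [add_comm 1]
  exact sum_range_qDescFactorial_div x a fun i hi => hx (i + 1) (mem_Icc.mpr ⟨by omega, by omega⟩)

end QDescFactorial

section QMatrices

variable {p : ℕ} {q : ℂ}

noncomputable def dWeight (q : ℂ) (m : ℕ) : ℂ := (q - q⁻¹) * q ^ (1 - (m : ℤ)) * qint q m

theorem dmat_eq_weightedShift : dmat p q = weightedShift p (dWeight q) := rfl

theorem zmat_eq_transpose_weightedShift : zmat p = (weightedShift p 1)ᵀ := by
  ext i j
  simp [zmat, weightedShift_apply]

theorem zmat_pow_mul_dmat_pow (k : ℕ) :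
    zmat p ^ k * dmat p q ^ k =
      diagonal fun a : Fin p =>
        if k ≤ (a : ℕ) then ∏ m ∈ Ioc ((a : ℕ) - k) a, dWeight q m else 0 := by
  rw [zmat_eq_transpose_weightedShift, dmat_eq_weightedShift, ← transpose_pow,
    transpose_weightedShift_pow_mul_pow]
  simp only [Pi.one_apply, one_mul]

theorem sub_inv_mul_qint (q : ℂ) (n : ℕ) : (q - q⁻¹) * qint q n = q ^ n - q⁻¹ ^ n := by
  rcases eq_or_ne (q - q⁻¹) 0 with h | h
  · rw [h, zero_mul, eq_comm, sub_eq_zero]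
    exact congrArg (· ^ n) (sub_eq_zero.mp h)
  · exact mul_div_cancel₀ _ h

theorem inv_pow_eq_pow_mul_inv_sq_pow (hq : q ≠ 0) (n : ℕ) : q⁻¹ ^ n = q ^ n * (q⁻¹ ^ 2) ^ n := by
  rw [← mul_pow]
  congr 1
  field_simp

theorem qint_eq (hq : q ≠ 0) (n : ℕ) : qint q n = q ^ n * (1 - (q⁻¹ ^ 2) ^ n) / (q - q⁻¹) := by
  rw [qint, inv_pow_eq_pow_mul_inv_sq_pow hq]
  ring

theorem dWeight_eq (hq : q ≠ 0) (m : ℕ) : dWeight q m = q * (1 - (q⁻¹ ^ 2) ^ m) := by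
  rw [dWeight, mul_right_comm, sub_inv_mul_qint, zpow_sub₀ hq, zpow_one, zpow_natCast,
    inv_pow_eq_pow_mul_inv_sq_pow hq]
  field_simp

theorem qint_inv_mul_prod_dWeight (hq : q ≠ 0) {a i : ℕ} (hi : i ≤ a) :
    (qint q i)⁻¹ * ∏ m ∈ Ioc (a - i) a, dWeight q m =
      (q - q⁻¹) * (qDescFactorial (q⁻¹ ^ 2) a i / (1 - (q⁻¹ ^ 2) ^ i)) := by
  have hprod : ∏ m ∈ Ioc (a - i) a, dWeight q m = q ^ i * qDescFactorial (q⁻¹ ^ 2) a i := by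
    rw [prod_congr rfl fun m _ => dWeight_eq hq m, prod_mul_distrib, prod_const, Nat.card_Ioc,
      Nat.sub_sub_self hi, qDescFactorial]
  rw [hprod, qint_eq hq, inv_div, div_mul_eq_mul_div, mul_left_comm,
    mul_div_mul_left _ _ (pow_ne_zero i hq), mul_div_assoc]

theorem sum_qint_inv_mul_prod_dWeight (hq : q ≠ 0) (a : ℕ)
    (hx : ∀ i ∈ Icc 1 a, 1 - (q⁻¹ ^ 2) ^ i ≠ 0) :
    ∑ i ∈ Icc 1 a, (qint q i)⁻¹ * ∏ m ∈ Ioc (a - i) a, dWeight q m = (q - q⁻¹) * a := by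
  rw [sum_congr rfl fun i hi => qint_inv_mul_prod_dWeight hq (mem_Icc.mp hi).2, ← mul_sum,
    sum_Icc_qDescFactorial_div _ a hx]

end QMatrices

theorem isPrimitiveRoot_inv_sq_exp {p : ℕ} (hp : p ≠ 0) :
    IsPrimitiveRoot ((Complex.exp (Real.pi * Complex.I / p))⁻¹ ^ 2) p := by
  have h2p : IsPrimitiveRoot (Complex.exp (Real.pi * Complex.I / p)) (2 * p) := by
    convert Complex.isPrimitiveRoot_exp (2 * p) (by omega) using 2
    push_cast
    field_simp
  rw [inv_pow]
  exact (h2p.pow (by omega) rfl).inv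

theorem stmt4_general (p : ℕ) (q : ℂ)
    (hq : q = Complex.exp ((Real.pi : ℂ) * Complex.I / (p : ℂ))) :
    ∑ i ∈ Finset.Icc 1 (p - 1), (qint q i)⁻¹ • (zmat p ^ i * dmat p q ^ i)
      = (q - q⁻¹) • Matrix.diagonal (fun i : Fin p => ((i : ℕ) : ℂ)) := by
  have hq0 : q ≠ 0 := hq ▸ Complex.exp_ne_zero _
  simp only [zmat_pow_mul_dmat_pow, ← diagonal_smul]
  refine (map_sum (diagonalAddMonoidHom (Fin p) ℂ) _ _).symm.trans
    (congrArg diagonal (funext fun a => ?_))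
  have hx : ∀ i ∈ Icc 1 (a : ℕ), 1 - (q⁻¹ ^ 2) ^ i ≠ 0 := fun i hi =>
    sub_ne_zero.mpr ((hq ▸ isPrimitiveRoot_inv_sq_exp (Fin.pos a).ne').pow_ne_one_of_pos_of_lt
      (by grind) (by grind)).symm
  have htail : ∀ i ∈ Icc 1 (p - 1), i ∉ Icc 1 (a : ℕ) →
      (qint q i)⁻¹ * (if i ≤ (a : ℕ) then ∏ m ∈ Ioc ((a : ℕ) - i) a, dWeight q m else 0) = 0 :=
    fun i _ hi => by rw [if_neg (by grind), mul_zero]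
  simp only [Finset.sum_apply, Pi.smul_apply, smul_eq_mul]
  rw [← sum_subset (Icc_subset_Icc_right (by omega)) htail,
    ← sum_qint_inv_mul_prod_dWeight hq0 a hx]
  exact sum_congr rfl fun i hi => by rw [if_pos (mem_Icc.mp hi).2]

/-- `t = Σ_{i=1}^{p-1} (1/[i]_q) z^i d^i` equals `(q - q⁻¹)` times the
diagonal matrix `diag(0, 1, 2, …, p-1)` with ordinary integer entries. -/
theorem stmt4 (p : ℕ) (hp : 2 ≤ p) (q : ℂ)
    (hq : q = Complex.exp ((Real.pi : ℂ) * Complex.I / (p : ℂ))) :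
    ∑ i ∈ Finset.Icc 1 (p - 1), (qint q i)⁻¹ • (zmat p ^ i * dmat p q ^ i)
      = (q - q⁻¹) • Matrix.diagonal (fun i : Fin p => ((i : ℕ) : ℂ)) :=
  stmt4_general p q hq
end

section
/- Let q = e^{iπ/p} and consider the differential algebra Ω of the previous statement with additionally z^p = 0, ∂^p = 0. Then the 1-forms z^{p-1}ζ and ∂^{p-1}δ are d-closed but not d-exact; i.e., they represent nonzero classes in the cohomology of (Ω, d) in degree 1. -/
/-- The defining relations of `ΩĀ`: generators `0 = z`, `1 = ∂`, `2 = ζ`, `3 = δ`,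
with `∂z = (q-q⁻¹)·1 + q⁻² z∂`, `z^p = ∂^p = 0`, `ζ² = δ² = 0`, `δζ = -q⁻² ζδ`,
`ζz = q⁻² zζ`, `δ∂ = q² ∂δ`, `ζ∂ = q² ∂ζ`, `δz = q⁻² zδ`. -/
inductive OmBarRel (q : ℂ) (p : ℕ) : FreeAlgebra ℂ (Fin 4) → FreeAlgebra ℂ (Fin 4) → Prop
  | dz : OmBarRel q p (FreeAlgebra.ι ℂ 1 * FreeAlgebra.ι ℂ 0)
      ((q - q⁻¹) • (1 : FreeAlgebra ℂ (Fin 4))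
        + (q⁻¹ ^ 2) • (FreeAlgebra.ι ℂ 0 * FreeAlgebra.ι ℂ 1))
  | zp : OmBarRel q p ((FreeAlgebra.ι ℂ 0) ^ p) 0
  | dp : OmBarRel q p ((FreeAlgebra.ι ℂ 1) ^ p) 0
  | zeta2 : OmBarRel q p (FreeAlgebra.ι ℂ 2 * FreeAlgebra.ι ℂ 2) 0
  | delta2 : OmBarRel q p (FreeAlgebra.ι ℂ 3 * FreeAlgebra.ι ℂ 3) 0
  | deltazeta : OmBarRel q p (FreeAlgebra.ι ℂ 3 * FreeAlgebra.ι ℂ 2)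
      ((-(q⁻¹ ^ 2)) • (FreeAlgebra.ι ℂ 2 * FreeAlgebra.ι ℂ 3))
  | zetaz : OmBarRel q p (FreeAlgebra.ι ℂ 2 * FreeAlgebra.ι ℂ 0)
      ((q⁻¹ ^ 2) • (FreeAlgebra.ι ℂ 0 * FreeAlgebra.ι ℂ 2))
  | deltad : OmBarRel q p (FreeAlgebra.ι ℂ 3 * FreeAlgebra.ι ℂ 1)
      ((q ^ 2) • (FreeAlgebra.ι ℂ 1 * FreeAlgebra.ι ℂ 3))
  | zetad : OmBarRel q p (FreeAlgebra.ι ℂ 2 * FreeAlgebra.ι ℂ 1)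
      ((q ^ 2) • (FreeAlgebra.ι ℂ 1 * FreeAlgebra.ι ℂ 2))
  | deltaz : OmBarRel q p (FreeAlgebra.ι ℂ 3 * FreeAlgebra.ι ℂ 0)
      ((q⁻¹ ^ 2) • (FreeAlgebra.ι ℂ 0 * FreeAlgebra.ι ℂ 3))

/-- The images of the generators `z`, `∂`, `ζ`, `δ` in `ΩĀ`. -/
noncomputable def omBarGen (q : ℂ) (p : ℕ) (i : Fin 4) : RingQuot (OmBarRel q p) :=
  RingQuot.mkRingHom (OmBarRel q p) (FreeAlgebra.ι ℂ i)

/-!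
Closedness is the Leibniz rule: `D(z^m) ζ = 0` by induction, since `ζ z^m = q^{-2m} z^m ζ` and
`ζ² = 0`.

Non-exactness is detected by a representation `ρ` of `Ω` on the truncated de Rham complex
`V = ℂ[x]/(x^p) ⊗ Λ[dx]`: `z` acts as multiplication by `x`, `∂` as `(q - q⁻¹)` times the
`q⁻²`-derivative, `ζ` as left multiplication by `dx` and `δ` as `0`. With `d` the `q⁻²`-de Rham
differential of `V`, the maps `a ↦ ρ(D a)` and `a ↦ d ρ(a) - ρ(σ a) d` are twisted derivations
agreeing on generators, hence equal. Truncation is compatible with all this because `q²` is a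
primitive `p`-th root of unity, so `[p]_{q^{±2}} = 0`. Now `d 1 = 0` and `x^{p-1} dx` does not
occur in the image of `d`, so the `x^{p-1} dx`-coefficient of `ρ(D ω) 1` vanishes, while for
`z^{p-1} ζ` it is `1`. Exchanging the roles of `z, ζ` and `∂, δ` handles `∂^{p-1} δ`.
-/

def qNum (w : ℂ) (k : ℕ) : ℂ := ∑ j ∈ Finset.range k, w ^ j

lemma qNum_succ (w : ℂ) (k : ℕ) : qNum w (k + 1) = 1 + w * qNum w k := by
  rw [qNum, geom_sum_succ, qNum, add_comm]

lemma qNum_succ' (w : ℂ) (k : ℕ) : qNum w (k + 1) = qNum w k + w ^ k :=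
  Finset.sum_range_succ _ _

namespace TruncatedDeRham

variable (p : ℕ)

/-! `f : Fin p → ℂ` stands for `∑ₖ f k • xᵏ ∈ ℂ[x]/(x^p)`; `raise` is multiplication by `x` and
`lower w` the `w`-derivative `xᵏ ↦ [k]_w xᵏ⁻¹`. -/

def raise : Module.End ℂ (Fin p → ℂ) where
  toFun f i := if h : 0 < (i : ℕ) then f ⟨i - 1, by omega⟩ else 0
  map_add' f g := by ext i; by_cases h : 0 < (i : ℕ) <;> simp [h]
  map_smul' c f := by ext i; by_cases h : 0 < (i : ℕ) <;> simp [h]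

def lower (w : ℂ) : Module.End ℂ (Fin p → ℂ) where
  toFun f i := if h : (i : ℕ) + 1 < p then qNum w (i + 1) * f ⟨i + 1, h⟩ else 0
  map_add' f g := by ext i; by_cases h : (i : ℕ) + 1 < p <;> simp [h, mul_add]
  map_smul' c f := by ext i; by_cases h : (i : ℕ) + 1 < p <;> simp [h, mul_left_comm]

def weight (w : ℂ) : Module.End ℂ (Fin p → ℂ) where
  toFun f i := w ^ (i : ℕ) * f i
  map_add' f g := by ext i; simp [mul_add]
  map_smul' c f := by ext i; simp [mul_left_comm]

variable {p}

lemma raise_apply (f : Fin p → ℂ) (i : Fin p) :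
    raise p f i = if h : 0 < (i : ℕ) then f ⟨i - 1, by omega⟩ else 0 := rfl

lemma lower_apply (w : ℂ) (f : Fin p → ℂ) (i : Fin p) :
    lower p w f i = if h : (i : ℕ) + 1 < p then qNum w (i + 1) * f ⟨i + 1, h⟩ else 0 := rfl

lemma weight_apply (w : ℂ) (f : Fin p → ℂ) (i : Fin p) :
    weight p w f i = w ^ (i : ℕ) * f i := rfl

lemma raise_pow_apply (n : ℕ) (f : Fin p → ℂ) (i : Fin p) :
    (raise p ^ n) f i = if h : n ≤ (i : ℕ) then f ⟨i - n, by omega⟩ else 0 := by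
  induction n generalizing i with
  | zero => simp
  | succ n ih =>
    rw [pow_succ', Module.End.mul_apply, raise_apply]
    by_cases h : n + 1 ≤ (i : ℕ)
    · rw [dif_pos (by omega), ih, dif_pos (by simp only; omega), dif_pos h]
      congr 2
      simp only
      omega
    · rw [dif_neg h]
      split_ifs
      · rw [ih, dif_neg (by simp only; omega)]
      · rfl

lemma raise_pow_eq_zero : raise p ^ p = 0 := by
  refine LinearMap.ext fun f => funext fun i => ?_
  simp [raise_pow_apply, not_le.mpr i.isLt]

lemma lower_pow_apply (w : ℂ) (n : ℕ) (f : Fin p → ℂ) (i : Fin p) (h : p ≤ (i : ℕ) + n) :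
    (lower p w ^ n) f i = 0 := by
  induction n generalizing i with
  | zero => omega
  | succ n ih =>
    rw [pow_succ', Module.End.mul_apply, lower_apply]
    split_ifs
    · rw [ih _ (by simp only; omega), mul_zero]
    · rfl

lemma lower_pow_eq_zero (w : ℂ) : lower p w ^ p = 0 :=
  LinearMap.ext fun f => funext fun i => lower_pow_apply w p f i (by omega)

variable {w : ℂ}

lemma raise_mul_lower_apply (f : Fin p → ℂ) (i : Fin p) :
    (raise p * lower p w) f i = qNum w i * f i := by
  obtain ⟨_ | i, hi⟩ := i
  · simp [raise_apply, qNum]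
  · simp [raise_apply, lower_apply, hi]

lemma lower_mul_raise_apply (hw : qNum w p = 0) (f : Fin p → ℂ) (i : Fin p) :
    (lower p w * raise p) f i = qNum w (i + 1) * f i := by
  obtain ⟨i, hi⟩ := i
  by_cases h : i + 1 < p
  · simp [raise_apply, lower_apply, h]
  · obtain rfl : p = i + 1 := by omega
    simp [lower_apply, hw]

lemma lower_mul_raise (hw : qNum w p = 0) :
    lower p w * raise p = 1 + w • (raise p * lower p w) := by
  refine LinearMap.ext fun f => funext fun i => ?_
  simp only [lower_mul_raise_apply hw, LinearMap.add_apply, LinearMap.smul_apply, Pi.add_apply,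
    Pi.smul_apply, Module.End.one_apply, smul_eq_mul, raise_mul_lower_apply, qNum_succ]
  ring

lemma lower_mul_raise_sub_raise_mul_lower (hw : qNum w p = 0) :
    lower p w * raise p - raise p * lower p w = weight p w := by
  refine LinearMap.ext fun f => funext fun i => ?_
  simp only [LinearMap.sub_apply, Pi.sub_apply, lower_mul_raise_apply hw, raise_mul_lower_apply,
    weight_apply, qNum_succ']
  ring

lemma weight_mul_raise : weight p w * raise p = w • (raise p * weight p w) := by
  refine LinearMap.ext fun f => funext fun ⟨i, hi⟩ => ?_
  rcases i with _ | i
  · simp [raise_apply, weight_apply]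
  · simp only [Module.End.mul_apply, LinearMap.smul_apply, Pi.smul_apply, smul_eq_mul,
      raise_apply, weight_apply, dif_pos i.succ_pos, Nat.add_sub_cancel, pow_succ]
    ring

lemma lower_mul_weight : lower p w * weight p w = w • (weight p w * lower p w) := by
  refine LinearMap.ext fun f => funext fun ⟨i, hi⟩ => ?_
  by_cases h : i + 1 < p
  · simp only [Module.End.mul_apply, LinearMap.smul_apply, Pi.smul_apply, smul_eq_mul,
      lower_apply, weight_apply, dif_pos h, pow_succ]
    ring
  · simp [lower_apply, weight_apply, h]

/-! Elements of `V = ℂ[x]/(x^p) ⊗ Λ[dx]` are pairs `(f₀, f₁)` standing for `f₀ + f₁ dx`, so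
operators on `V` are `2 × 2` block matrices; `mulDX` is left multiplication by `dx`, which
passes `xᵏ` at the price `wᵏ`, and `diff` is the `w`-de Rham differential. -/

variable (p w)

def mulX : Matrix (Fin 2) (Fin 2) (Module.End ℂ (Fin p → ℂ)) :=
  !![raise p, 0; 0, raise p]

def qDeriv : Matrix (Fin 2) (Fin 2) (Module.End ℂ (Fin p → ℂ)) :=
  !![lower p w, 0; 0, lower p w]

def mulDX : Matrix (Fin 2) (Fin 2) (Module.End ℂ (Fin p → ℂ)) :=
  !![0, 0; weight p w, 0]

def diff : Matrix (Fin 2) (Fin 2) (Module.End ℂ (Fin p → ℂ)) :=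
  !![0, 0; lower p w, 0]

variable {p w}

lemma mulX_pow (n : ℕ) : mulX p ^ n = !![raise p ^ n, 0; 0, raise p ^ n] := by
  induction n with
  | zero => simp [Matrix.one_fin_two]
  | succ n ih => rw [pow_succ, ih, mulX]; simp [pow_succ]

lemma qDeriv_pow (n : ℕ) : qDeriv p w ^ n = !![lower p w ^ n, 0; 0, lower p w ^ n] := by
  induction n with
  | zero => simp [Matrix.one_fin_two]
  | succ n ih => rw [pow_succ, ih, qDeriv]; simp [pow_succ]

lemma mulX_pow_eq_zero : mulX p ^ p = 0 := by
  ext i j : 1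
  fin_cases i <;> fin_cases j <;> simp [mulX_pow, raise_pow_eq_zero]

lemma qDeriv_pow_eq_zero : qDeriv p w ^ p = 0 := by
  ext i j : 1
  fin_cases i <;> fin_cases j <;> simp [qDeriv_pow, lower_pow_eq_zero]

lemma qDeriv_mul_mulX (hw : qNum w p = 0) :
    qDeriv p w * mulX p = 1 + w • (mulX p * qDeriv p w) := by
  simp [qDeriv, mulX, Matrix.one_fin_two, lower_mul_raise hw]

lemma diff_mul_mulX_sub (hw : qNum w p = 0) :
    diff p w * mulX p - mulX p * diff p w = mulDX p w := by
  ext i j : 1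
  fin_cases i <;> fin_cases j <;>
    simp [diff, mulX, mulDX, ← lower_mul_raise_sub_raise_mul_lower hw]

lemma diff_mul_qDeriv : diff p w * qDeriv p w = qDeriv p w * diff p w := by
  ext i j : 1
  fin_cases i <;> fin_cases j <;> simp [diff, qDeriv]

lemma mulDX_mul_mulX : mulDX p w * mulX p = w • (mulX p * mulDX p w) := by
  ext i j : 1
  fin_cases i <;> fin_cases j <;> simp [mulDX, mulX, weight_mul_raise]

lemma qDeriv_mul_mulDX : qDeriv p w * mulDX p w = w • (mulDX p w * qDeriv p w) := by
  ext i j : 1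
  fin_cases i <;> fin_cases j <;> simp [mulDX, qDeriv, lower_mul_weight]

lemma mulDX_mul_mulDX : mulDX p w * mulDX p w = 0 := by
  ext i j : 1
  fin_cases i <;> fin_cases j <;> simp [mulDX]

lemma diff_mul_mulDX_add : diff p w * mulDX p w + mulDX p w * diff p w = 0 := by
  ext i j : 1
  fin_cases i <;> fin_cases j <;> simp [mulDX, diff]

section TopCoefficient

variable {n : ℕ}

lemma lower_apply_last (f : Fin (n + 1) → ℂ) : lower (n + 1) w f (Fin.last n) = 0 := by
  rw [lower_apply, dif_neg (by simp)]

lemma lower_single_zero : lower (n + 1) w (Pi.single 0 1) = 0 := by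
  refine funext fun i => ?_
  rw [lower_apply]
  split_ifs
  · rw [Pi.single_eq_of_ne (by rw [Ne, Fin.ext_iff, Fin.val_zero, Fin.val_mk]; omega), mul_zero]
    rfl
  · rfl

lemma diff_mul_apply_last (X : Matrix (Fin 2) (Fin 2) (Module.End ℂ (Fin (n + 1) → ℂ)))
    (v : Fin (n + 1) → ℂ) : (diff (n + 1) w * X) 1 0 v (Fin.last n) = 0 := by
  simp [diff, Matrix.mul_apply, lower_apply_last]

lemma mul_diff_apply_single (X : Matrix (Fin 2) (Fin 2) (Module.End ℂ (Fin (n + 1) → ℂ))) :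
    (X * diff (n + 1) w) 1 0 (Pi.single 0 1) = 0 := by
  simp [diff, Matrix.mul_apply, lower_single_zero]

lemma mulX_pow_mul_mulDX_apply :
    (mulX (n + 1) ^ n * mulDX (n + 1) w) 1 0 (Pi.single 0 1) (Fin.last n) = 1 := by
  rw [mulX_pow, mulDX, Matrix.mul_fin_two]
  simp only [Matrix.of_apply, Matrix.cons_val_one, Matrix.cons_val_zero, mul_zero, zero_mul,
    zero_add, Module.End.mul_apply, raise_pow_apply, weight_apply, Fin.val_last, dif_pos le_rfl,
    Nat.sub_self, Fin.zero_eta]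
  simp

theorem not_exists_apply_eq {A : Type*} [Ring A] [Algebra ℂ A] {σ : A →ₐ[ℂ] A}
    {D : A →ₗ[ℂ] A} (ρ : A →ₐ[ℂ] Matrix (Fin 2) (Fin 2) (Module.End ℂ (Fin (n + 1) → ℂ)))
    (hρ : ∀ x, ρ (D x) = diff (n + 1) w * ρ x - ρ (σ x) * diff (n + 1) w) {y : A}
    (hy : ρ y = mulX (n + 1) ^ n * mulDX (n + 1) w) : ¬ ∃ x, D x = y := by
  rintro ⟨x, rfl⟩
  have h := mulX_pow_mul_mulDX_apply (n := n) (w := w)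
  rw [← hy, hρ, Matrix.sub_apply, LinearMap.sub_apply, Pi.sub_apply, diff_mul_apply_last,
    mul_diff_apply_single] at h
  simp at h

end TopCoefficient

end TruncatedDeRham

section TwistedLeibniz

variable {R A B : Type*} [CommRing R] [Ring A] [Algebra R A] [Ring B] [Algebra R B]
  {σ : A →ₐ[R] A} {D : A →ₗ[R] A}

lemma map_one_eq_zero_of_leibniz (hD : ∀ a b, D (a * b) = D a * b + σ a * D b) : D 1 = 0 := by
  simpa using hD 1 1

lemma map_pow_mul_eq_zero_of_leibniz (hD : ∀ a b, D (a * b) = D a * b + σ a * D b)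
    {x y : A} {c : R} (hσx : σ x = x) (hDx : D x = y) (hDy : D y = 0) (hyy : y * y = 0)
    (hyx : y * x = c • (x * y)) (m : ℕ) : D (x ^ m * y) = 0 := by
  have hy_pow : ∀ n, y * x ^ n = c ^ n • (x ^ n * y) := by
    intro n
    induction n with
    | zero => simp
    | succ n ih =>
      rw [pow_succ, ← mul_assoc, ih, smul_mul_assoc, mul_assoc, hyx, mul_smul_comm, smul_smul,
        ← mul_assoc, pow_succ]
  have hD_pow_mul : ∀ n, D (x ^ n) * y = 0 := by
    intro n
    induction n with
    | zero => rw [pow_zero, map_one_eq_zero_of_leibniz hD, zero_mul]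
    | succ n ih =>
      rw [pow_succ', hD, hσx, hDx, add_mul, mul_assoc x, ih, mul_zero, add_zero, hy_pow,
        smul_mul_assoc, mul_assoc, hyy, mul_zero, smul_zero]
  rw [hD, hD_pow_mul, hDy, mul_zero, add_zero]

lemma apply_eq_commutator_of_adjoin_eq_top (hD : ∀ a b, D (a * b) = D a * b + σ a * D b)
    (ρ : A →ₐ[R] B) (d : B) {s : Set A} (hs : Algebra.adjoin R s = ⊤)
    (hgen : ∀ x ∈ s, ρ (D x) = d * ρ x - ρ (σ x) * d) (x : A) :
    ρ (D x) = d * ρ x - ρ (σ x) * d := by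
  have hx : x ∈ Algebra.adjoin R s := hs ▸ Algebra.mem_top
  induction hx using Algebra.adjoin_induction with
  | mem x hx => exact hgen x hx
  | algebraMap r =>
    rw [Algebra.algebraMap_eq_smul_one, map_smul, map_one_eq_zero_of_leibniz hD]
    simp
  | add x y _ _ hx hy => simp only [map_add, hx, hy]; noncomm_ring
  | mul x y _ _ hx hy => simp only [hD, map_add, map_mul, hx, hy]; noncomm_ring

end TwistedLeibniz

section OmBar

variable {q : ℂ} {p : ℕ}

lemma omBarGen_eq_mkAlgHom (i : Fin 4) :
    omBarGen q p i = RingQuot.mkAlgHom ℂ (OmBarRel q p) (FreeAlgebra.ι ℂ i) := by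
  rw [omBarGen, ← RingQuot.mkAlgHom_coe ℂ]
  rfl

lemma adjoin_range_omBarGen : Algebra.adjoin ℂ (Set.range (omBarGen q p)) = ⊤ := by
  rw [show omBarGen q p = RingQuot.mkAlgHom ℂ (OmBarRel q p) ∘ FreeAlgebra.ι ℂ from
      funext omBarGen_eq_mkAlgHom, Set.range_comp, Algebra.adjoin_image,
    FreeAlgebra.adjoin_range_ι, Algebra.map_top, AlgHom.range_eq_top]
  exact RingQuot.mkAlgHom_surjective ℂ _

lemma omBarGen_two_mul_self : omBarGen q p 2 * omBarGen q p 2 = 0 := by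
  simpa [omBarGen_eq_mkAlgHom] using RingQuot.mkAlgHom_rel ℂ (OmBarRel.zeta2 (q := q) (p := p))

lemma omBarGen_three_mul_self : omBarGen q p 3 * omBarGen q p 3 = 0 := by
  simpa [omBarGen_eq_mkAlgHom] using RingQuot.mkAlgHom_rel ℂ (OmBarRel.delta2 (q := q) (p := p))

lemma omBarGen_two_mul_zero :
    omBarGen q p 2 * omBarGen q p 0 = q⁻¹ ^ 2 • (omBarGen q p 0 * omBarGen q p 2) := by
  simpa [omBarGen_eq_mkAlgHom] using RingQuot.mkAlgHom_rel ℂ (OmBarRel.zetaz (q := q) (p := p))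

lemma omBarGen_three_mul_one :
    omBarGen q p 3 * omBarGen q p 1 = q ^ 2 • (omBarGen q p 1 * omBarGen q p 3) := by
  simpa [omBarGen_eq_mkAlgHom] using RingQuot.mkAlgHom_rel ℂ (OmBarRel.deltad (q := q) (p := p))

variable {B : Type*} [Ring B] [Algebra ℂ B]

def omBarLift (g : Fin 4 → B)
    (hg : ∀ ⦃x y⦄, OmBarRel q p x y → FreeAlgebra.lift ℂ g x = FreeAlgebra.lift ℂ g y) :
    RingQuot (OmBarRel q p) →ₐ[ℂ] B :=
  RingQuot.liftAlgHom ℂ ⟨FreeAlgebra.lift ℂ g, hg⟩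

@[simp]
lemma omBarLift_omBarGen (g : Fin 4 → B)
    (hg : ∀ ⦃x y⦄, OmBarRel q p x y → FreeAlgebra.lift ℂ g x = FreeAlgebra.lift ℂ g y)
    (i : Fin 4) : omBarLift g hg (omBarGen q p i) = g i := by
  rw [omBarLift, omBarGen_eq_mkAlgHom, RingQuot.liftAlgHom_mkAlgHom_apply,
    FreeAlgebra.lift_ι_apply]

structure IsOmBarDifferential (σ : RingQuot (OmBarRel q p) →ₐ[ℂ] RingQuot (OmBarRel q p))
    (D : RingQuot (OmBarRel q p) →ₗ[ℂ] RingQuot (OmBarRel q p)) : Prop where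
  σ_z : σ (omBarGen q p 0) = omBarGen q p 0
  σ_del : σ (omBarGen q p 1) = omBarGen q p 1
  σ_ζ : σ (omBarGen q p 2) = -omBarGen q p 2
  σ_δ : σ (omBarGen q p 3) = -omBarGen q p 3
  D_z : D (omBarGen q p 0) = omBarGen q p 2
  D_del : D (omBarGen q p 1) = omBarGen q p 3
  D_ζ : D (omBarGen q p 2) = 0
  D_δ : D (omBarGen q p 3) = 0
  leibniz : ∀ a b, D (a * b) = D a * b + σ a * D b

namespace IsOmBarDifferential

variable {σ : RingQuot (OmBarRel q p) →ₐ[ℂ] RingQuot (OmBarRel q p)}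
  {D : RingQuot (OmBarRel q p) →ₗ[ℂ] RingQuot (OmBarRel q p)}

lemma map_z_pow_mul_ζ (hD : IsOmBarDifferential σ D) (m : ℕ) :
    D (omBarGen q p 0 ^ m * omBarGen q p 2) = 0 :=
  map_pow_mul_eq_zero_of_leibniz hD.leibniz hD.σ_z hD.D_z hD.D_ζ omBarGen_two_mul_self
    omBarGen_two_mul_zero m

lemma map_del_pow_mul_δ (hD : IsOmBarDifferential σ D) (m : ℕ) :
    D (omBarGen q p 1 ^ m * omBarGen q p 3) = 0 :=
  map_pow_mul_eq_zero_of_leibniz hD.leibniz hD.σ_del hD.D_del hD.D_δ omBarGen_three_mul_self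
    omBarGen_three_mul_one m

lemma map_apply_eq_commutator (hD : IsOmBarDifferential σ D)
    (ρ : RingQuot (OmBarRel q p) →ₐ[ℂ] B) (d : B)
    (h_z : ρ (omBarGen q p 2) = d * ρ (omBarGen q p 0) - ρ (omBarGen q p 0) * d)
    (h_del : ρ (omBarGen q p 3) = d * ρ (omBarGen q p 1) - ρ (omBarGen q p 1) * d)
    (h_ζ : d * ρ (omBarGen q p 2) + ρ (omBarGen q p 2) * d = 0)
    (h_δ : d * ρ (omBarGen q p 3) + ρ (omBarGen q p 3) * d = 0) (x : RingQuot (OmBarRel q p)) :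
    ρ (D x) = d * ρ x - ρ (σ x) * d := by
  refine apply_eq_commutator_of_adjoin_eq_top hD.leibniz ρ d adjoin_range_omBarGen ?_ x
  rintro _ ⟨i, rfl⟩
  fin_cases i
  · simpa [hD.σ_z, hD.D_z] using h_z
  · simpa [hD.σ_del, hD.D_del] using h_del
  · simpa [hD.σ_ζ, hD.D_ζ, sub_eq_add_neg, eq_comm] using h_ζ
  · simpa [hD.σ_δ, hD.D_δ, sub_eq_add_neg, eq_comm] using h_δ

end IsOmBarDifferential

end OmBar

section Representations

open TruncatedDeRham

variable {q : ℂ} {p : ℕ}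

noncomputable def positionRep (hq : q ≠ 0) (hw : qNum (q⁻¹ ^ 2) p = 0) :
    RingQuot (OmBarRel q p) →ₐ[ℂ] Matrix (Fin 2) (Fin 2) (Module.End ℂ (Fin p → ℂ)) :=
  omBarLift ![mulX p, (q - q⁻¹) • qDeriv p (q⁻¹ ^ 2), mulDX p (q⁻¹ ^ 2), 0] <| by
    rintro _ _ ⟨⟩ <;> simp only [map_mul, map_pow, map_add, map_smul, map_one, map_zero,
      FreeAlgebra.lift_ι_apply, Matrix.cons_val]
    case dz =>
      rw [smul_mul_assoc, qDeriv_mul_mulX hw, mul_smul_comm]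
      module
    case zp => exact mulX_pow_eq_zero
    case dp => rw [smul_pow, qDeriv_pow_eq_zero, smul_zero]
    case zeta2 => exact mulDX_mul_mulDX
    case zetaz => exact mulDX_mul_mulX
    case zetad =>
      rw [mul_smul_comm, smul_mul_assoc, qDeriv_mul_mulDX, smul_smul, smul_smul]
      congr 1
      field_simp
    all_goals simp

/-- The scalar `q - q³ = -q² (q - q⁻¹)` is the one forced by `∂z = (q - q⁻¹) + q⁻² z∂`. -/
noncomputable def momentumRep (hq : q ≠ 0) (hw : qNum (q ^ 2) p = 0) :
    RingQuot (OmBarRel q p) →ₐ[ℂ] Matrix (Fin 2) (Fin 2) (Module.End ℂ (Fin p → ℂ)) :=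
  omBarLift ![(q - q ^ 3) • qDeriv p (q ^ 2), mulX p, 0, mulDX p (q ^ 2)] <| by
    rintro _ _ ⟨⟩ <;> simp only [map_mul, map_pow, map_add, map_smul, map_one, map_zero,
      FreeAlgebra.lift_ι_apply, Matrix.cons_val]
    case dz =>
      rw [smul_mul_assoc, qDeriv_mul_mulX hw, mul_smul_comm, smul_add, smul_add, smul_smul,
        smul_smul, smul_smul]
      have h₁ : q - q⁻¹ + q⁻¹ ^ 2 * (q - q ^ 3) = 0 := by field_simp; ring
      have h₂ : q⁻¹ ^ 2 * (q - q ^ 3) * q ^ 2 = q - q ^ 3 := by field_simp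
      rw [← add_assoc, ← add_smul, h₁, zero_smul, zero_add, h₂]
    case zp => rw [smul_pow, qDeriv_pow_eq_zero, smul_zero]
    case dp => exact mulX_pow_eq_zero
    case delta2 => exact mulDX_mul_mulDX
    case deltad => exact mulDX_mul_mulX
    case deltaz =>
      rw [mul_smul_comm, smul_mul_assoc, qDeriv_mul_mulDX, smul_smul, smul_smul]
      congr 1
      field_simp
    all_goals simp

namespace IsOmBarDifferential

variable {σ : RingQuot (OmBarRel q p) →ₐ[ℂ] RingQuot (OmBarRel q p)}
  {D : RingQuot (OmBarRel q p) →ₗ[ℂ] RingQuot (OmBarRel q p)}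

lemma positionRep_map (hD : IsOmBarDifferential σ D) (hq : q ≠ 0) (hw : qNum (q⁻¹ ^ 2) p = 0)
    (x : RingQuot (OmBarRel q p)) :
    positionRep hq hw (D x) =
      diff p (q⁻¹ ^ 2) * positionRep hq hw x - positionRep hq hw (σ x) * diff p (q⁻¹ ^ 2) := by
  refine hD.map_apply_eq_commutator _ _ ?_ ?_ ?_ ?_ x <;>
    simp only [positionRep, omBarLift_omBarGen, Matrix.cons_val]
  · exact (diff_mul_mulX_sub hw).symm
  · rw [mul_smul_comm, smul_mul_assoc, diff_mul_qDeriv, sub_self]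
  · exact diff_mul_mulDX_add
  · simp

lemma momentumRep_map (hD : IsOmBarDifferential σ D) (hq : q ≠ 0) (hw : qNum (q ^ 2) p = 0)
    (x : RingQuot (OmBarRel q p)) :
    momentumRep hq hw (D x) =
      diff p (q ^ 2) * momentumRep hq hw x - momentumRep hq hw (σ x) * diff p (q ^ 2) := by
  refine hD.map_apply_eq_commutator _ _ ?_ ?_ ?_ ?_ x <;>
    simp only [momentumRep, omBarLift_omBarGen, Matrix.cons_val]
  · rw [mul_smul_comm, smul_mul_assoc, diff_mul_qDeriv, sub_self]
  · exact (diff_mul_mulX_sub hw).symm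
  · simp
  · exact diff_mul_mulDX_add

end IsOmBarDifferential

end Representations

lemma isPrimitiveRoot_exp_pi_mul_I_div_sq {p : ℕ} (hp : p ≠ 0) :
    IsPrimitiveRoot (Complex.exp (Real.pi * Complex.I / p) ^ 2) p := by
  convert Complex.isPrimitiveRoot_exp p hp using 1
  rw [← Complex.exp_nat_mul]
  ring_nf

/-- for `q = e^{iπ/p}` and any differential `D` on `ΩĀ` (a graded
derivation with parity automorphism `σ`, `D(z) = ζ`, `D(∂) = δ`, `D(ζ) = D(δ) = 0`),
the 1-forms `z^{p-1}ζ` and `∂^{p-1}δ` are `D`-closed but not `D`-exact. -/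
theorem stmt18 (p : ℕ) (hp : 2 ≤ p) (q : ℂ)
    (hq : q = Complex.exp ((Real.pi : ℂ) * Complex.I / (p : ℂ))) :
    ∀ (σ : RingQuot (OmBarRel q p) →ₐ[ℂ] RingQuot (OmBarRel q p))
      (D : RingQuot (OmBarRel q p) →ₗ[ℂ] RingQuot (OmBarRel q p)),
      σ (omBarGen q p 0) = omBarGen q p 0 → σ (omBarGen q p 1) = omBarGen q p 1 →
      σ (omBarGen q p 2) = -omBarGen q p 2 → σ (omBarGen q p 3) = -omBarGen q p 3 →
      D (omBarGen q p 0) = omBarGen q p 2 → D (omBarGen q p 1) = omBarGen q p 3 →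
      D (omBarGen q p 2) = 0 → D (omBarGen q p 3) = 0 →
      (∀ a b, D (a * b) = D a * b + σ a * D b) →
      (D (omBarGen q p 0 ^ (p - 1) * omBarGen q p 2) = 0 ∧
        ¬ ∃ ω, D ω = omBarGen q p 0 ^ (p - 1) * omBarGen q p 2) ∧
      (D (omBarGen q p 1 ^ (p - 1) * omBarGen q p 3) = 0 ∧
        ¬ ∃ ω, D ω = omBarGen q p 1 ^ (p - 1) * omBarGen q p 3) := by
  intro σ D hσ_z hσ_del hσ_ζ hσ_δ hD_z hD_del hD_ζ hD_δ hleibniz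
  have hD : IsOmBarDifferential σ D :=
    ⟨hσ_z, hσ_del, hσ_ζ, hσ_δ, hD_z, hD_del, hD_ζ, hD_δ, hleibniz⟩
  have hq₀ : q ≠ 0 := hq ▸ Complex.exp_ne_zero _
  have hprim : IsPrimitiveRoot (q ^ 2) p := hq ▸ isPrimitiveRoot_exp_pi_mul_I_div_sq (by omega)
  have hw : qNum (q ^ 2) p = 0 := hprim.geom_sum_eq_zero (by omega)
  have hw' : qNum (q⁻¹ ^ 2) p = 0 := inv_pow q 2 ▸ hprim.inv.geom_sum_eq_zero (by omega)
  obtain ⟨n, rfl⟩ : ∃ n, p = n + 1 := ⟨p - 1, by omega⟩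
  refine ⟨⟨hD.map_z_pow_mul_ζ _, ?_⟩, ⟨hD.map_del_pow_mul_δ _, ?_⟩⟩
  · exact TruncatedDeRham.not_exists_apply_eq _ (hD.positionRep_map hq₀ hw')
      (by simp [positionRep])
  · exact TruncatedDeRham.not_exists_apply_eq _ (hD.momentumRep_map hq₀ hw)
      (by simp [momentumRep])
end
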